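/- arXiv:1404.5148 — 2 statements merged into one kernel-verified Lean document; each statement's English description precedes it below -/
import Mathlib

section
/- Let b₁ ∈ ℝ and set b₂ = −b₁, and take ω₀ = π/2. Then a nonzero λ ∈ ℂ is an eigenvalue of the nonlocal problem NP(π/2, b₁, −b₁) if and only if λ = k·i for some nonzero integer k. -/
/-!
On `[-ω₀, ω₀]` with `λ ≠ 0`, factoring `d² - λ² = (d - λ)(d + λ)` into two first-order equations
shows that every solution of `φ'' = λ²φ` is `C cosh(λω) + D sinh(λω)` with `C = φ 0`,
`λ D = φ' 0`. Since `cosh` is even and `sinh` odd, for `b₂ = -b₁` the two boundary conditions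
become `C cosh(λω₀) = 0` and `D sinh(λω₀) = b₁ C`, which have a nontrivial solution exactly when
`sinh(2λω₀) = 2 sinh(λω₀) cosh(λω₀)` vanishes. For `ω₀ = π/2` this means `λ ∈ iℤ`.
-/

open Real Set

/-- `lam` is an eigenvalue of the nonlocal problem `NP(ω₀, b₁, b₂)`. -/
def NPEigen (ω₀ b₁ b₂ : ℝ) (lam : ℂ) : Prop :=
  ∃ φ : ℝ → ℂ,
    Differentiable ℝ φ ∧ Differentiable ℝ (deriv φ) ∧
    (∃ ω ∈ Icc (-ω₀) ω₀, φ ω ≠ 0) ∧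
    (∀ ω ∈ Icc (-ω₀) ω₀, deriv (deriv φ) ω = lam ^ 2 * φ ω) ∧
    φ (-ω₀) + (b₁ : ℂ) * φ 0 = 0 ∧ φ ω₀ + (b₂ : ℂ) * φ 0 = 0

theorem Complex.sinh_eq_zero_iff {z : ℂ} :
    Complex.sinh z = 0 ↔ ∃ k : ℤ, z = k * π * Complex.I := by
  rw [← mul_left_inj' Complex.I_ne_zero, zero_mul, ← Complex.sin_mul_I, Complex.sin_eq_zero_iff]
  refine ⟨fun ⟨k, hk⟩ => ⟨-k, ?_⟩, fun ⟨k, hk⟩ => ⟨-k, ?_⟩⟩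
  · push_cast
    linear_combination (-Complex.I) * hk + z * Complex.I_sq
  · rw [hk]
    push_cast
    linear_combination ((k : ℂ) * π) * Complex.I_sq

theorem Convex.eq_mul_exp_of_deriv_eq_mul {s : Set ℝ} (hs : Convex ℝ s) {f : ℝ → ℂ}
    (hf : Differentiable ℝ f) {c : ℂ} (hderiv : ∀ x ∈ s, deriv f x = c * f x) {x y : ℝ}
    (hx : x ∈ s) (hy : y ∈ s) : f y = f x * Complex.exp (c * (y - x)) := by
  set g : ℝ → ℂ := fun t => f t * Complex.exp (-(c * t))
  have hg : ∀ t ∈ s, HasDerivWithinAt g 0 s t := by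
    intro t ht
    have hlin : HasDerivAt (fun t : ℝ => c * t) c t := by
      simpa using (hasDerivAt_id t).ofReal_comp.const_mul c
    have := (hf t).hasDerivAt.fun_mul hlin.fun_neg.cexp
    rw [hderiv t ht] at this
    exact (this.congr_deriv (by ring)).hasDerivWithinAt
  have hgxy : g y = g x := by
    simpa [sub_eq_zero] using
      hs.norm_image_sub_le_of_norm_hasDerivWithin_le hg (C := 0) (by simp) hx hy
  calc f y = g y * Complex.exp (c * y) := by simp [g, mul_assoc, ← Complex.exp_add]
    _ = g x * Complex.exp (c * y) := by rw [hgxy]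
    _ = f x * Complex.exp (c * (y - x)) := by
      simp only [g, mul_assoc, ← Complex.exp_add]
      ring_nf

noncomputable def coshSinhComb (lam C D : ℂ) (ω : ℝ) : ℂ :=
  C * Complex.cosh (lam * ω) + D * Complex.sinh (lam * ω)

section coshSinhComb

variable (lam C D : ℂ)

@[simp]
theorem coshSinhComb_zero : coshSinhComb lam C D 0 = C := by
  simp [coshSinhComb]

theorem hasDerivAt_coshSinhComb (x : ℝ) :
    HasDerivAt (coshSinhComb lam C D) (lam * coshSinhComb lam D C x) x := by
  have hlin : HasDerivAt (fun t : ℝ => lam * t) lam x := by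
    simpa using (hasDerivAt_id x).ofReal_comp.const_mul lam
  exact (((Complex.hasDerivAt_cosh _).comp x hlin).const_mul C |>.fun_add
    (((Complex.hasDerivAt_sinh _).comp x hlin).const_mul D)).congr_deriv
    (by simp only [coshSinhComb]; ring)

theorem differentiable_coshSinhComb : Differentiable ℝ (coshSinhComb lam C D) :=
  fun x => (hasDerivAt_coshSinhComb lam C D x).differentiableAt

theorem deriv_coshSinhComb :
    deriv (coshSinhComb lam C D) = fun x => lam * coshSinhComb lam D C x :=
  funext fun x => (hasDerivAt_coshSinhComb lam C D x).deriv

theorem deriv_deriv_coshSinhComb :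
    deriv (deriv (coshSinhComb lam C D)) = fun x => lam ^ 2 * coshSinhComb lam C D x := by
  funext x
  rw [deriv_coshSinhComb, deriv_const_mul_field', deriv_coshSinhComb]
  ring

variable {lam C D}

theorem exists_coshSinhComb_ne_zero {ω₀ : ℝ} (hω₀ : 0 < ω₀) (hlam : lam ≠ 0)
    (hCD : C ≠ 0 ∨ D ≠ 0) : ∃ ω ∈ Icc (-ω₀) ω₀, coshSinhComb lam C D ω ≠ 0 := by
  by_contra! hzero
  have hnhds : coshSinhComb lam C D =ᶠ[nhds 0] fun _ => 0 :=
    Filter.eventually_of_mem (Icc_mem_nhds (by linarith) hω₀) hzero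
  have hC : C = 0 := by simpa using hnhds.eq_of_nhds
  have hD : lam * D = 0 := by simpa [deriv_coshSinhComb] using hnhds.deriv_eq
  simp_all

end coshSinhComb

theorem eqOn_coshSinhComb_of_deriv_deriv_eq {s : Set ℝ} (hs : Convex ℝ s) (hs₀ : (0 : ℝ) ∈ s)
    {lam : ℂ} (hlam : lam ≠ 0) {φ : ℝ → ℂ} (hφ : Differentiable ℝ φ)
    (hφ' : Differentiable ℝ (deriv φ)) (hode : ∀ x ∈ s, deriv (deriv φ) x = lam ^ 2 * φ x) :
    EqOn φ (coshSinhComb lam (φ 0) (deriv φ 0 / lam)) s := by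
  intro y hy
  have factor : ∀ μ : ℂ, μ ^ 2 = lam ^ 2 →
      deriv φ y - μ * φ y = (deriv φ 0 - μ * φ 0) * Complex.exp (-μ * y) := by
    intro μ hμ
    have := hs.eq_mul_exp_of_deriv_eq_mul (c := -μ) (hφ'.fun_sub (hφ.const_mul μ))
      (fun x hx => ?_) hs₀ hy
    · rwa [Complex.ofReal_zero, sub_zero] at this
    rw [deriv_fun_sub (hφ' x) ((hφ x).const_mul μ), deriv_const_mul μ (hφ x), hode x hx, ← hμ]
    ring
  have hplus := factor (-lam) (by ring)
  have hminus := factor lam rfl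
  simp only [coshSinhComb]
  field_simp
  simp only [neg_neg, neg_mul] at hplus hminus
  linear_combination (hplus - hminus) / 2 - lam * φ 0 * Complex.two_cosh (lam * y) / 2
    - deriv φ 0 * Complex.two_sinh (lam * y) / 2

theorem npEigen_iff_exists_coshSinhComb {ω₀ b₁ b₂ : ℝ} {lam : ℂ} (hω₀ : 0 < ω₀)
    (hlam : lam ≠ 0) :
    NPEigen ω₀ b₁ b₂ lam ↔ ∃ C D : ℂ, (C ≠ 0 ∨ D ≠ 0) ∧
      coshSinhComb lam C D (-ω₀) + b₁ * C = 0 ∧ coshSinhComb lam C D ω₀ + b₂ * C = 0 := by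
  constructor
  · rintro ⟨φ, hφ, hφ', ⟨ω, hω, hφω⟩, hode, hbc₁, hbc₂⟩
    have hφ_eq := eqOn_coshSinhComb_of_deriv_deriv_eq (convex_Icc _ _)
      ⟨by linarith, hω₀.le⟩ hlam hφ hφ' hode
    refine ⟨φ 0, deriv φ 0 / lam, ?_, ?_, ?_⟩
    · by_contra! hzero
      simp [hφ_eq hω, hzero, coshSinhComb] at hφω
    · rwa [← hφ_eq (left_mem_Icc.2 (by linarith))]
    · rwa [← hφ_eq (right_mem_Icc.2 (by linarith))]
  · rintro ⟨C, D, hCD, hbc₁, hbc₂⟩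
    refine ⟨coshSinhComb lam C D, differentiable_coshSinhComb lam C D, ?_,
      exists_coshSinhComb_ne_zero hω₀ hlam hCD, fun _ _ => by rw [deriv_deriv_coshSinhComb],
      by simpa using hbc₁, by simpa using hbc₂⟩
    rw [deriv_coshSinhComb]
    exact (differentiable_coshSinhComb lam D C).const_mul lam

theorem exists_coshSinhComb_antisymmetric_iff (lam : ℂ) (ω₀ b : ℝ) :
    (∃ C D : ℂ, (C ≠ 0 ∨ D ≠ 0) ∧
      coshSinhComb lam C D (-ω₀) + b * C = 0 ∧ coshSinhComb lam C D ω₀ + ((-b : ℝ) : ℂ) * C = 0) ↔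
      Complex.sinh (2 * (lam * ω₀)) = 0 := by
  have hcs := Complex.cosh_sq_sub_sinh_sq (lam * ω₀)
  simp only [coshSinhComb, Complex.ofReal_neg, mul_neg, Complex.cosh_neg, Complex.sinh_neg,
    Complex.sinh_two_mul]
  set c := Complex.cosh (lam * ω₀)
  set s := Complex.sinh (lam * ω₀)
  constructor
  · rintro ⟨C, D, hCD, hbc₁, hbc₂⟩
    have hc : C * c = 0 := by linear_combination (hbc₁ + hbc₂) / 2
    have hs : D * s = b * C := by linear_combination (hbc₂ - hbc₁) / 2
    rcases mul_eq_zero.1 hc with hC | hc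
    · have hD : D ≠ 0 := hCD.resolve_left (not_not.2 hC)
      rw [hC, mul_zero, mul_eq_zero, or_iff_right hD] at hs
      simp [hs]
    · simp [hc]
  · intro h
    rcases mul_eq_zero.1 h with h | hc
    · refine ⟨0, 1, by simp, ?_, ?_⟩ <;> simp [(mul_eq_zero.1 h).resolve_left two_ne_zero]
    · refine ⟨1, -b * s, by simp, ?_, ?_⟩
      · linear_combination -b * hcs + (1 + b * c) * hc
      · linear_combination b * hcs + (1 - b * c) * hc

theorem eigenvalues_antisymmetric_case (b₁ : ℝ) (lam : ℂ) (hlam : lam ≠ 0) :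
    NPEigen (π / 2) b₁ (-b₁) lam ↔ ∃ k : ℤ, k ≠ 0 ∧ lam = (k : ℂ) * Complex.I := by
  rw [npEigen_iff_exists_coshSinhComb (by positivity) hlam, exists_coshSinhComb_antisymmetric_iff,
    show 2 * (lam * (π / 2 : ℝ)) = lam * π by push_cast; ring, Complex.sinh_eq_zero_iff]
  have hπ : (π : ℂ) ≠ 0 := Complex.ofReal_ne_zero.2 pi_ne_zero
  refine exists_congr fun k => ⟨fun hk => ?_, fun ⟨_, hk⟩ => by rw [hk]; ring⟩
  have hk' : lam = k * Complex.I := mul_right_cancel₀ hπ (by linear_combination hk)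
  exact ⟨by rintro rfl; simp_all, hk'⟩
end

section
/- Let b₁, b₂ ∈ ℝ and let m be an odd integer. Then the nonlocal system NS(b₁, b₂) has an eigenvalue λ ∈ ℂ with Im λ = m if and only if b₁·b₂ ≤ 0. -/
/-!
A solution of `φ'' = λ²φ` with `φ(-π/2) = 0` satisfies `λ φ(ω) = φ'(-π/2) sinh (λ (ω + π/2))`:
its Wronskians with `sinh (λ (ω + π/2))` and `cosh (λ (ω + π/2))` are constant, and
`cosh² - sinh² = 1` eliminates `φ'`. So when `s = sinh (λπ/2) ≠ 0`, since `sinh (λπ) = 2 s c` with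
`c = cosh (λπ/2)`, the boundary conditions become the linear system `2c A + b₁ B = 0`,
`2c B + b₂ A = 0` in the slopes `A = φ₁'(-π/2)`, `B = φ₂'(-π/2)`: `λ` is an eigenvalue iff
`(2c)² = b₁ b₂`. On the line `Im λ = m` with `m` odd, `s` never vanishes and
`(2c)² = -(2 sinh (π Re λ / 2))²`, which takes exactly the values in `(-∞, 0]`.
-/

open Real Set

/-- `lam` is an eigenvalue of the nonlocal system `NS(b₁, b₂)`. -/
def NSEigen (b₁ b₂ : ℝ) (lam : ℂ) : Prop :=
  ∃ φ₁ φ₂ : ℝ → ℂ,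
    Differentiable ℝ φ₁ ∧ Differentiable ℝ (deriv φ₁) ∧
    Differentiable ℝ φ₂ ∧ Differentiable ℝ (deriv φ₂) ∧
    ((∃ ω ∈ Icc (-(π / 2)) (π / 2), φ₁ ω ≠ 0) ∨ (∃ ω ∈ Icc (-(π / 2)) (π / 2), φ₂ ω ≠ 0)) ∧
    (∀ ω ∈ Icc (-(π / 2)) (π / 2), deriv (deriv φ₁) ω = lam ^ 2 * φ₁ ω) ∧
    (∀ ω ∈ Icc (-(π / 2)) (π / 2), deriv (deriv φ₂) ω = lam ^ 2 * φ₂ ω) ∧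
    φ₁ (-(π / 2)) = 0 ∧ φ₁ (π / 2) + (b₁ : ℂ) * φ₂ 0 = 0 ∧
    φ₂ (-(π / 2)) = 0 ∧ φ₂ (π / 2) + (b₂ : ℂ) * φ₁ 0 = 0

theorem hasDerivAt_sinh_mul_sub (lam : ℂ) (a x : ℝ) :
    HasDerivAt (fun x : ℝ => Complex.sinh (lam * (x - a)))
      (lam * Complex.cosh (lam * (x - a))) x := by
  have h := ((Complex.hasDerivAt_sinh _).comp (x : ℂ)
    (((hasDerivAt_id (x : ℂ)).sub_const (a : ℂ)).const_mul lam)).comp_ofReal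
  simpa [mul_comm] using h

theorem hasDerivAt_cosh_mul_sub (lam : ℂ) (a x : ℝ) :
    HasDerivAt (fun x : ℝ => Complex.cosh (lam * (x - a)))
      (lam * Complex.sinh (lam * (x - a))) x := by
  have h := ((Complex.hasDerivAt_cosh _).comp (x : ℂ)
    (((hasDerivAt_id (x : ℂ)).sub_const (a : ℂ)).const_mul lam)).comp_ofReal
  simpa [mul_comm] using h

theorem wronskian_eq_on_Icc {f f' g g' : ℝ → ℂ} {k : ℂ} {a b : ℝ}
    (hf : ∀ x, HasDerivAt f (f' x) x) (hg : ∀ x, HasDerivAt g (g' x) x)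
    (hf' : ∀ x ∈ Icc a b, HasDerivAt f' (k * f x) x)
    (hg' : ∀ x ∈ Icc a b, HasDerivAt g' (k * g x) x) :
    ∀ x ∈ Icc a b, f' x * g x - f x * g' x = f' a * g a - f a * g' a := by
  have hW : ∀ x ∈ Icc a b, HasDerivAt (fun x => f' x * g x - f x * g' x) 0 x := fun x hx =>
    (((hf' x hx).mul (hg x)).sub ((hf x).mul (hg' x hx))).congr_deriv (by ring)
  exact constant_of_has_deriv_right_zero (fun x hx => (hW x hx).continuousAt.continuousWithinAt)
    fun x hx => (hW x (Ico_subset_Icc_self hx)).hasDerivWithinAt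

theorem mul_eq_deriv_mul_sinh_of_deriv_deriv_eq {φ : ℝ → ℂ} {lam : ℂ} {a b : ℝ}
    (hφ : Differentiable ℝ φ) (hφ' : Differentiable ℝ (deriv φ))
    (hode : ∀ x ∈ Icc a b, deriv (deriv φ) x = lam ^ 2 * φ x) (ha : φ a = 0) :
    ∀ x ∈ Icc a b, lam * φ x = deriv φ a * Complex.sinh (lam * (x - a)) := by
  have hφ'' : ∀ x ∈ Icc a b, HasDerivAt (deriv φ) (lam ^ 2 * φ x) x :=
    fun x hx => hode x hx ▸ (hφ' x).hasDerivAt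
  have hsinh' : ∀ x ∈ Icc a b, HasDerivAt (fun x : ℝ => lam * Complex.cosh (lam * (x - a)))
      (lam ^ 2 * Complex.sinh (lam * (x - a))) x := fun x _ => by
    simpa [pow_two, mul_assoc] using (hasDerivAt_cosh_mul_sub lam a x).const_mul lam
  have hcosh' : ∀ x ∈ Icc a b, HasDerivAt (fun x : ℝ => lam * Complex.sinh (lam * (x - a)))
      (lam ^ 2 * Complex.cosh (lam * (x - a))) x := fun x _ => by
    simpa [pow_two, mul_assoc] using (hasDerivAt_sinh_mul_sub lam a x).const_mul lam
  intro x hx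
  have hWs := wronskian_eq_on_Icc (fun x => (hφ x).hasDerivAt) (hasDerivAt_sinh_mul_sub lam a)
    hφ'' hsinh' x hx
  have hWc := wronskian_eq_on_Icc (fun x => (hφ x).hasDerivAt) (hasDerivAt_cosh_mul_sub lam a)
    hφ'' hcosh' x hx
  simp only [sub_self, mul_zero, Complex.sinh_zero, Complex.cosh_zero, ha] at hWs hWc
  linear_combination Complex.sinh (lam * (x - a)) * hWc - Complex.cosh (lam * (x - a)) * hWs
    - lam * φ x * Complex.cosh_sq_sub_sinh_sq (lam * (x - a))

theorem deriv_const_mul_sinh_mul_sub (A lam : ℂ) (a : ℝ) :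
    deriv (fun x : ℝ => A * Complex.sinh (lam * (x - a))) =
      fun x : ℝ => A * lam * Complex.cosh (lam * (x - a)) :=
  funext fun x => by
    simpa only [mul_assoc] using ((hasDerivAt_sinh_mul_sub lam a x).const_mul A).deriv

theorem deriv_const_mul_cosh_mul_sub (A lam : ℂ) (a : ℝ) :
    deriv (fun x : ℝ => A * Complex.cosh (lam * (x - a))) =
      fun x : ℝ => A * lam * Complex.sinh (lam * (x - a)) :=
  funext fun x => by
    simpa only [mul_assoc] using ((hasDerivAt_cosh_mul_sub lam a x).const_mul A).deriv

theorem exists_ne_zero_solution_iff_sq_eq_mul {R : Type*} [CommRing R] [IsDomain R] (d p q : R) :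
    (∃ A B : R, (A ≠ 0 ∨ B ≠ 0) ∧ d * A + p * B = 0 ∧ d * B + q * A = 0) ↔ d ^ 2 = p * q := by
  constructor
  · rintro ⟨A, B, hAB | hAB, h₁, h₂⟩
    · exact sub_eq_zero.1 <| (mul_eq_zero.1 (by linear_combination d * h₁ - p * h₂ :
        (d ^ 2 - p * q) * A = 0)).resolve_right hAB
    · exact sub_eq_zero.1 <| (mul_eq_zero.1 (by linear_combination d * h₂ - q * h₁ :
        (d ^ 2 - p * q) * B = 0)).resolve_right hAB
  · intro h
    rcases eq_or_ne p 0 with rfl | hp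
    · have hd : d = 0 := pow_eq_zero_iff two_ne_zero |>.1 (by simpa using h)
      exact ⟨0, 1, Or.inr one_ne_zero, by simp [hd], by simp [hd]⟩
    · exact ⟨p, -d, Or.inl hp, by ring, by linear_combination -h⟩

theorem sinh_mul_pi_div_two_sub_neg_pi_div_two (lam : ℂ) :
    Complex.sinh (lam * ((π / 2 : ℝ) - (-(π / 2) : ℝ) : ℂ)) =
      2 * Complex.sinh (lam * (π / 2)) * Complex.cosh (lam * (π / 2)) := by
  rw [← Complex.sinh_two_mul]
  push_cast
  ring_nf

theorem sinh_mul_zero_sub_neg_pi_div_two (lam : ℂ) :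
    Complex.sinh (lam * ((0 : ℝ) - (-(π / 2) : ℝ) : ℂ)) = Complex.sinh (lam * (π / 2)) := by
  push_cast
  ring_nf

section Eigenvalue

variable {b₁ b₂ : ℝ} {lam : ℂ}

theorem two_mul_cosh_mul_add_eq_zero_of_eq_sinh {φ ψ : ℝ → ℂ} {A B : ℂ} {b : ℝ}
    (hs : Complex.sinh (lam * (π / 2)) ≠ 0)
    (hφ : lam * φ (π / 2) = A * Complex.sinh (lam * ((π / 2 : ℝ) - (-(π / 2) : ℝ) : ℂ)))
    (hψ : lam * ψ 0 = B * Complex.sinh (lam * ((0 : ℝ) - (-(π / 2) : ℝ) : ℂ)))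
    (hbc : φ (π / 2) + b * ψ 0 = 0) :
    2 * Complex.cosh (lam * (π / 2)) * A + b * B = 0 := by
  rw [sinh_mul_pi_div_two_sub_neg_pi_div_two] at hφ
  rw [sinh_mul_zero_sub_neg_pi_div_two] at hψ
  refine mul_left_cancel₀ hs ?_
  linear_combination lam * hbc - hφ - b * hψ

theorem NSEigen.exists_ne_zero_slopes (h : NSEigen b₁ b₂ lam)
    (hs : Complex.sinh (lam * (π / 2)) ≠ 0) :
    ∃ A B : ℂ, (A ≠ 0 ∨ B ≠ 0) ∧ 2 * Complex.cosh (lam * (π / 2)) * A + b₁ * B = 0 ∧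
      2 * Complex.cosh (lam * (π / 2)) * B + b₂ * A = 0 := by
  obtain ⟨φ₁, φ₂, hd₁, hd₁', hd₂, hd₂', hnt, hode₁, hode₂, hl₁, hr₁, hl₂, hr₂⟩ := h
  have hlam : lam ≠ 0 := by rintro rfl; simp at hs
  have r₁ := mul_eq_deriv_mul_sinh_of_deriv_deriv_eq hd₁ hd₁' hode₁ hl₁
  have r₂ := mul_eq_deriv_mul_sinh_of_deriv_deriv_eq hd₂ hd₂' hode₂ hl₂
  have hright : π / 2 ∈ Icc (-(π / 2)) (π / 2) := right_mem_Icc.2 (by linarith [pi_pos])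
  have hzero : (0 : ℝ) ∈ Icc (-(π / 2)) (π / 2) := ⟨by linarith [pi_pos], by linarith [pi_pos]⟩
  refine ⟨deriv φ₁ (-(π / 2)), deriv φ₂ (-(π / 2)), ?_,
    two_mul_cosh_mul_add_eq_zero_of_eq_sinh hs (r₁ _ hright) (r₂ _ hzero) hr₁,
    two_mul_cosh_mul_add_eq_zero_of_eq_sinh hs (r₂ _ hright) (r₁ _ hzero) hr₂⟩
  rcases hnt with ⟨ω, hω, hne⟩ | ⟨ω, hω, hne⟩
  · exact Or.inl fun hA => hne (by simpa [hA, hlam] using r₁ ω hω)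
  · exact Or.inr fun hB => hne (by simpa [hB, hlam] using r₂ ω hω)

theorem nsEigen_of_slopes {A B : ℂ} (hs : Complex.sinh (lam * (π / 2)) ≠ 0) (hAB : A ≠ 0 ∨ B ≠ 0)
    (h₁ : 2 * Complex.cosh (lam * (π / 2)) * A + b₁ * B = 0)
    (h₂ : 2 * Complex.cosh (lam * (π / 2)) * B + b₂ * A = 0) :
    NSEigen b₁ b₂ lam := by
  have hdiff (C : ℂ) :
      Differentiable ℝ fun x : ℝ => C * Complex.sinh (lam * (x - (-(π / 2) : ℝ))) :=
    fun x => ((hasDerivAt_sinh_mul_sub lam _ x).const_mul C).differentiableAt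
  have hdiff' (C : ℂ) :
      Differentiable ℝ (deriv fun x : ℝ => C * Complex.sinh (lam * (x - (-(π / 2) : ℝ)))) := by
    rw [deriv_const_mul_sinh_mul_sub]
    exact fun x => ((hasDerivAt_cosh_mul_sub lam _ x).const_mul _).differentiableAt
  have hode (C : ℂ) (x : ℝ) :
      deriv (deriv fun x : ℝ => C * Complex.sinh (lam * (x - (-(π / 2) : ℝ)))) x =
        lam ^ 2 * (C * Complex.sinh (lam * (x - (-(π / 2) : ℝ)))) := by
    rw [deriv_const_mul_sinh_mul_sub, deriv_const_mul_cosh_mul_sub]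
    ring
  have hzero : (0 : ℝ) ∈ Icc (-(π / 2)) (π / 2) := ⟨by linarith [pi_pos], by linarith [pi_pos]⟩
  refine ⟨fun x : ℝ => A * Complex.sinh (lam * (x - (-(π / 2) : ℝ))),
    fun x : ℝ => B * Complex.sinh (lam * (x - (-(π / 2) : ℝ))),
    hdiff A, hdiff' A, hdiff B, hdiff' B, ?_, fun x _ => hode A x, fun x _ => hode B x,
    by simp, ?_, by simp, ?_⟩
  · rcases hAB with hA | hB
    · exact Or.inl ⟨0, hzero, by simpa [sinh_mul_zero_sub_neg_pi_div_two] using ⟨hA, hs⟩⟩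
    · exact Or.inr ⟨0, hzero, by simpa [sinh_mul_zero_sub_neg_pi_div_two] using ⟨hB, hs⟩⟩
  all_goals
    simp only [sinh_mul_pi_div_two_sub_neg_pi_div_two, sinh_mul_zero_sub_neg_pi_div_two]
  · linear_combination Complex.sinh (lam * (π / 2)) * h₁
  · linear_combination Complex.sinh (lam * (π / 2)) * h₂

theorem nsEigen_iff (hs : Complex.sinh (lam * (π / 2)) ≠ 0) :
    NSEigen b₁ b₂ lam ↔ (2 * Complex.cosh (lam * (π / 2))) ^ 2 = b₁ * b₂ := by
  rw [← exists_ne_zero_solution_iff_sq_eq_mul]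
  exact ⟨fun h => h.exists_ne_zero_slopes hs,
    fun ⟨A, B, hAB, h₁, h₂⟩ => nsEigen_of_slopes hs hAB h₁ h₂⟩

end Eigenvalue

theorem Complex.sinh_add_mul_I_of_cos_eq_zero {x y : ℂ} (hy : Complex.cos y = 0) :
    Complex.sinh (x + y * Complex.I) = Complex.cosh x * Complex.sin y * Complex.I := by
  rw [Complex.sinh_add, Complex.cosh_mul_I, Complex.sinh_mul_I, hy]
  ring

theorem Complex.cosh_add_mul_I_of_cos_eq_zero {x y : ℂ} (hy : Complex.cos y = 0) :
    Complex.cosh (x + y * Complex.I) = Complex.sinh x * Complex.sin y * Complex.I := by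
  rw [Complex.cosh_add, Complex.cosh_mul_I, Complex.sinh_mul_I, hy]
  ring

section OddLine

variable {lam : ℂ} {m : ℤ}

theorem cos_mul_pi_div_two_of_odd (hm : Odd m) : Complex.cos (m * (π / 2)) = 0 := by
  obtain ⟨k, rfl⟩ := hm
  exact Complex.cos_eq_zero_iff.2 ⟨k, by push_cast; ring⟩

theorem sin_sq_mul_pi_div_two_of_odd (hm : Odd m) : Complex.sin (m * (π / 2)) ^ 2 = 1 := by
  linear_combination Complex.sin_sq_add_cos_sq (m * (π / 2) : ℂ) -
    Complex.cos (m * (π / 2)) * cos_mul_pi_div_two_of_odd hm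

theorem mul_pi_div_two_eq_of_im_eq (him : lam.im = m) :
    lam * (π / 2) = ((lam.re * (π / 2) : ℝ) : ℂ) + (m * (π / 2) : ℂ) * Complex.I := by
  conv_lhs => rw [← Complex.re_add_im lam, him]
  push_cast
  ring

theorem sinh_mul_pi_div_two_ne_zero_of_im_odd (hm : Odd m) (him : lam.im = m) :
    Complex.sinh (lam * (π / 2)) ≠ 0 := by
  rw [mul_pi_div_two_eq_of_im_eq him,
    Complex.sinh_add_mul_I_of_cos_eq_zero (cos_mul_pi_div_two_of_odd hm), ← Complex.ofReal_cosh]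
  have hsin : Complex.sin (m * (π / 2)) ≠ 0 := fun h => by
    simpa [h] using sin_sq_mul_pi_div_two_of_odd hm
  exact mul_ne_zero (mul_ne_zero (Complex.ofReal_ne_zero.2 (Real.cosh_pos _).ne') hsin)
    Complex.I_ne_zero

theorem two_mul_cosh_mul_pi_div_two_sq_of_im_odd (hm : Odd m) (him : lam.im = m) :
    (2 * Complex.cosh (lam * (π / 2))) ^ 2 =
      ((-(2 * Real.sinh (lam.re * (π / 2))) ^ 2 : ℝ) : ℂ) := by
  rw [mul_pi_div_two_eq_of_im_eq him,
    Complex.cosh_add_mul_I_of_cos_eq_zero (cos_mul_pi_div_two_of_odd hm), ← Complex.ofReal_sinh]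
  push_cast
  linear_combination
    (4 * Complex.sinh (lam.re * (π / 2) : ℂ) ^ 2 * Complex.sin (m * (π / 2)) ^ 2) * Complex.I_sq -
      4 * Complex.sinh (lam.re * (π / 2) : ℂ) ^ 2 * sin_sq_mul_pi_div_two_of_odd hm

end OddLine

theorem system_eigenvalue_on_odd_line_iff (b₁ b₂ : ℝ) (m : ℤ) (hm : Odd m) :
    (∃ lam : ℂ, lam.im = (m : ℝ) ∧ NSEigen b₁ b₂ lam) ↔ b₁ * b₂ ≤ 0 := by
  constructor
  · rintro ⟨lam, him, hE⟩
    rw [nsEigen_iff (sinh_mul_pi_div_two_ne_zero_of_im_odd hm him),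
      two_mul_cosh_mul_pi_div_two_sq_of_im_odd hm him] at hE
    have hE' : -(2 * Real.sinh (lam.re * (π / 2))) ^ 2 = b₁ * b₂ := by exact_mod_cast hE
    exact hE' ▸ neg_nonpos.2 (sq_nonneg _)
  · intro hb
    set u := Real.arsinh (√(-(b₁ * b₂)) / 2)
    let lam : ℂ := ⟨u / (π / 2), m⟩
    have hre : lam.re * (π / 2) = u := div_mul_cancel₀ u (by positivity)
    refine ⟨lam, rfl, (nsEigen_iff (sinh_mul_pi_div_two_ne_zero_of_im_odd hm rfl)).2 ?_⟩
    rw [two_mul_cosh_mul_pi_div_two_sq_of_im_odd hm rfl, hre, Real.sinh_arsinh,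
      mul_div_cancel₀ _ two_ne_zero, Real.sq_sqrt (by linarith)]
    push_cast
    ring
end
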